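/- In the one-pass refinement sampling process (Algorithm 3), for every index 1 ≤ J ≤ LK with J = (l,k), let X^J denote the set of edges e_t = (u_t, v_t) such that u_t and v_t lie in the same part of D_{J−1} at the moment e_t arrives. Then there is a constant c (depending on d) such that with probability at least 1 − n^{−d}, |E ∖ X^J| ≤ c·K·2^l·n. -/

import Mathlib

namespace GraphSparsification

open scoped BigOperators

variable {V : Type*}

/-- An edge `e` crosses the cut `(S, Sᶜ)`. -/
def Crosses (S : Set V) (e : Sym2 V) : Prop :=
  ∃ u v, e = s(u, v) ∧ u ∈ S ∧ v ∉ S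

/-- The value (number of edges) of the cut determined by `S` in the edge set `E`. -/
noncomputable def cutValue (E : Set (Sym2 V)) (S : Set V) : ℕ :=
  {e | e ∈ E ∧ Crosses S e}.ncard

/-- The graph with vertex set `U` and edge set `F` is `k`-connected:
every cut has value at least `k`. -/
def IsKConnected (U : Set V) (F : Set (Sym2 V)) (k : ℕ) : Prop :=
  ∀ S : Set V, S ⊆ U → S.Nonempty → S ≠ U → k ≤ cutValue F S

/-- Edges of `E` with both endpoints in `U` (the vertex-induced subgraph). -/
def induced (E : Set (Sym2 V)) (U : Set V) : Set (Sym2 V) :=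
  {e | e ∈ E ∧ ∀ x ∈ e, x ∈ U}

/-- `U` is a `k`-strong component of the graph with edge set `E`:
a maximal `k`-connected vertex-induced subgraph. -/
def IsStrongComponent (E : Set (Sym2 V)) (k : ℕ) (U : Set V) : Prop :=
  U.Nonempty ∧ IsKConnected U (induced E U) k ∧
    ∀ U' : Set V, U ⊆ U' → IsKConnected U' (induced E U') k → U' = U

/-- Strong connectivity of an edge: the largest `k` such that some `k`-strong component
contains `e`. -/
noncomputable def strongConn (E : Set (Sym2 V)) (e : Sym2 V) : ℕ :=
  sSup {k | ∃ U : Set V, IsStrongComponent E k U ∧ e ∈ induced E U}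

/-- Connectivity via edges of `F`. -/
def connRel (F : Set (Sym2 V)) : V → V → Prop :=
  Relation.ReflTransGen (fun a b => a ≠ b ∧ s(a, b) ∈ F)

/-- Number of connected components of the graph on `V` with edge set `F`. -/
noncomputable def numComponents (F : Set (Sym2 V)) : ℕ :=
  Nat.card (Quot (fun a b : V => a ≠ b ∧ s(a, b) ∈ F))

/-- Weight of the cut determined by `S` in the weighted graph `(E', w)`. -/
noncomputable def cutWeight (E' : Set (Sym2 V)) (w : Sym2 V → ℝ) (S : Set V) : ℝ :=
  ∑ᶠ e ∈ {e | e ∈ E' ∧ Crosses S e}, w e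

/-- The weighted graph `(E', w)` is an `ε`-sparsification of `E`: every weighted cut is
within a `(1 ± ε)` factor of the corresponding cut of `E`. -/
def IsSparsification (E E' : Set (Sym2 V)) (w : Sym2 V → ℝ) (ε : ℝ) : Prop :=
  ∀ S : Set V, S.Nonempty → S ≠ Set.univ →
    (1 - ε) * (cutValue E S : ℝ) ≤ cutWeight E' w S ∧
      cutWeight E' w S ≤ (1 + ε) * (cutValue E S : ℝ)

/-- Probability weight of the outcome `σ` when each coin `a` comes up `true`
independently with probability `p a`. -/
noncomputable def bernWeight {α : Type*} [Fintype α] (p : α → ℝ) (σ : α → Bool) : ℝ :=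
  ∏ a, if σ a then p a else 1 - p a

/-- Probability of the event `A` under independent coins with head-probabilities `p`. -/
noncomputable def Pr {α : Type*} [Fintype α] [DecidableEq α] (p : α → ℝ)
    (A : Set (α → Bool)) : ℝ :=
  ∑ σ : α → Bool, A.indicator (bernWeight p) σ

/-- Expectation of `f` under independent coins with head-probabilities `p`. -/
noncomputable def Exp {α : Type*} [Fintype α] [DecidableEq α] (p : α → ℝ)
    (f : (α → Bool) → ℝ) : ℝ :=
  ∑ σ : α → Bool, bernWeight p σ * f σ

/-- Same-part relation of the partition `S_{l,k}` of refinement sampling after `k` rounds of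
refinement at level `l` (the `Fin L` index `l` represents level `l+1`, and the `Fin K`
index `k` represents round `k+1`): `S_{l,0} = {V}`, and `S_{l,k+1}` splits each part of
`S_{l,k}` into the connected components spanned by edges whose `(l,k+1)`-coin is `true`
and whose endpoints lie in one part of `S_{l,k}`. -/
def sameS (E : Set (Sym2 V)) {L K : ℕ} (σ : Fin L × Fin K × Sym2 V → Bool) (l : Fin L) :
    ℕ → V → V → Prop
  | 0 => fun _ _ => True
  | k + 1 => fun u v =>
      Relation.ReflTransGen (fun a b => a ≠ b ∧ s(a, b) ∈ E ∧ sameS E σ l k a b ∧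
        ∃ hk : k < K, σ (l, ⟨k, hk⟩, s(a, b)) = true) u v

/-- `L(e)`: the minimum level `l ∈ {1, …, L}` such that the endpoints of `e` lie in
different parts of `S_{l,K}`. -/
noncomputable def levelOf (E : Set (Sym2 V)) {L K : ℕ} (σ : Fin L × Fin K × Sym2 V → Bool)
    (e : Sym2 V) : ℕ :=
  sInf {m | ∃ l : Fin L, m = (l : ℕ) + 1 ∧ ∀ u v : V, e = s(u, v) → ¬ sameS E σ l K u v}

/-- Head-probabilities of the refinement-sampling coins: the coin of level `l` (represented
by the `Fin L` index `l - 1`) comes up `true` with probability `2^{-l}`. -/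
noncomputable def pCoins {L K : ℕ} : Fin L × Fin K × Sym2 V → ℝ :=
  fun x => (1 / 2 : ℝ) ^ ((x.1 : ℕ) + 1)

/-- One step of Algorithm 3: process the arriving edge `e` with coins `coin` (indexed by
`J ∈ {1, …, LK}`), updating the partitions `D`, where `D 0` is the trivial partition `{V}`:
for `J = 1, 2, …` in order, the parts of `D J` containing the endpoints of `e` are merged
if the `J`-th coin of `e` is `true` and the endpoints of `e` lie in one part of the
(already updated) partition number `J - 1`. -/
def processEdge (e : Sym2 V) (coin : ℕ → Bool) (D : ℕ → V → V → Prop) : ℕ → V → V → Prop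
  | 0 => fun _ _ => True
  | J + 1 => fun u v =>
      Relation.EqvGen (fun a b => D (J + 1) a b ∨
        (coin (J + 1) = true ∧ s(a, b) = e ∧ processEdge e coin D J a b)) u v

/-- Initial state of the partitions of Algorithm 3: `D 0 = {V}` is the trivial partition and
all other partitions consist of singletons. -/
def initD : ℕ → V → V → Prop
  | 0 => fun _ _ => True
  | _ + 1 => Eq

/-- State of the partitions of Algorithm 3 after the first `t` edges of the stream `es`
have been processed. -/
def DStream (coin : Sym2 V → ℕ → Bool) (es : ℕ → Sym2 V) : ℕ → ℕ → V → V → Prop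
  | 0 => initD
  | t + 1 => processEdge (es t) (coin (es t)) (DStream coin es t)

/-- The endpoints of the edge `es t` lie in the same part of partition number `J` at the
moment `es t` arrives (i.e. while `es t` is being processed, partitions `0, …, J` having
already been updated). -/
def connectedAtArrival (coin : Sym2 V → ℕ → Bool) (es : ℕ → Sym2 V) (t J : ℕ) : Prop :=
  ∀ u v : V, es t = s(u, v) → processEdge (es t) (coin (es t)) (DStream coin es t) J u v

/-- The coins of Algorithm 3, reindexed by `J = K(l-1) + k`. -/
def coinOf {L K : ℕ} (σ : Fin L × Fin K × Sym2 V → Bool) : Sym2 V → ℕ → Bool :=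
  fun e J =>
    if h : 1 ≤ J ∧ (J - 1) / K < L ∧ (J - 1) % K < K then
      σ (⟨(J - 1) / K, h.2.1⟩, ⟨(J - 1) % K, h.2.2⟩, e)
    else false

/-- `L'(e_t)`: the minimum level `l ∈ {1, …, L}` such that the endpoints of the edge `es t`
lie in different parts of `D_{(l,K)}` (i.e. partition number `lK`) when `es t` is
processed. -/
noncomputable def streamLevel (coin : Sym2 V → ℕ → Bool) (es : ℕ → Sym2 V) (K L t : ℕ) : ℕ :=
  sInf {l | 1 ≤ l ∧ l ≤ L ∧ ∀ u v : V, es t = s(u, v) → ¬ DStream coin es (t + 1) (l * K) u v}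

/-!
A weak edge `e_t` (endpoints separated in `D_{J-1}` on arrival) was, at some index `i < J`, a
*trial* whose coin came up tails: its endpoints were joined in `D_{i-1}` but not in `D_i`. A trial
with heads merges two parts of `D_i`, so there are at most `n` of them, and every trial reads a
fresh coin of bias `p = 2^{-l(i)}`. Hence `x ^ #tails * y ^ #heads` with `p y + (1 - p) x = 1`
has mean one, and Markov's inequality bounds the tails at index `i` by `O(2^{l(i)} n)` outside an
event of probability `2^{-Ω(n)}`; a union bound over the at most `n (n + 1)` indices and a
geometric sum over the levels give the claim. If `K > n` the bound is trivial, as there are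
fewer than `n²` edges.
-/

section BernoulliProduct

variable {α : Type*} [Fintype α] (p : α → ℝ)

theorem bernWeight_nonneg (hp : ∀ a, p a ∈ Set.Icc (0 : ℝ) 1) (σ : α → Bool) :
    0 ≤ bernWeight p σ :=
  Finset.prod_nonneg fun a _ => by
    obtain ⟨h0, h1⟩ := hp a
    split <;> linarith

variable [DecidableEq α]

theorem sum_bernWeight : ∑ σ : α → Bool, bernWeight p σ = 1 := by
  simp only [bernWeight]
  rw [← Fintype.prod_sum fun a (b : Bool) => if b then p a else 1 - p a]
  simp

theorem bernWeight_funSplitAt_symm (a : α) (b : Bool) (τ : {j // j ≠ a} → Bool) :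
    bernWeight p ((Equiv.funSplitAt a Bool).symm (b, τ)) =
      (if b then p a else 1 - p a) * ∏ j : {j // j ≠ a}, if τ j then p j else 1 - p j := by
  rw [bernWeight, Fintype.prod_eq_mul_prod_subtype_ne _ a]
  congr 1
  · simp [Equiv.funSplitAt]
  · exact Finset.prod_congr rfl fun j _ => by simp [Equiv.funSplitAt, j.2]

theorem Exp_eq_sum_funSplitAt (a : α) (f : (α → Bool) → ℝ) :
    Exp p f = ∑ τ : {j // j ≠ a} → Bool, (∏ j : {j // j ≠ a}, if τ j then p j else 1 - p j) *
      (p a * f ((Equiv.funSplitAt a Bool).symm (true, τ)) +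
        (1 - p a) * f ((Equiv.funSplitAt a Bool).symm (false, τ))) := by
  rw [Exp, ← (Equiv.funSplitAt a Bool).symm.sum_comp, Fintype.sum_prod_type, Fintype.sum_bool,
    ← Finset.sum_add_distrib]
  refine Finset.sum_congr rfl fun τ _ => ?_
  simp only [bernWeight_funSplitAt_symm, if_true, Bool.false_eq_true, if_false]
  ring

theorem Exp_eq_Exp_update (a : α) (f : (α → Bool) → ℝ) :
    Exp p f = Exp p fun σ =>
      p a * f (Function.update σ a true) + (1 - p a) * f (Function.update σ a false) := by
  have hupd : ∀ b b' τ, Function.update ((Equiv.funSplitAt a Bool).symm (b, τ)) a b' =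
      (Equiv.funSplitAt a Bool).symm (b', τ) := by
    intro b b' τ
    ext j
    by_cases h : j = a
    · subst h; simp [Equiv.funSplitAt]
    · simp [Equiv.funSplitAt, h]
  rw [Exp_eq_sum_funSplitAt p a f, Exp_eq_sum_funSplitAt p a]
  refine Finset.sum_congr rfl fun τ _ => ?_
  simp only [hupd]
  ring

end BernoulliProduct

section Probability

variable {α : Type*} [Fintype α] [DecidableEq α] {p : α → ℝ}

theorem Pr_add_Pr_compl (A : Set (α → Bool)) : Pr p A + Pr p Aᶜ = 1 := by
  rw [Pr, Pr, ← Finset.sum_add_distrib, ← sum_bernWeight p]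
  exact Finset.sum_congr rfl fun σ _ => Set.indicator_self_add_compl_apply A _ σ

theorem one_sub_le_Pr_of_Pr_compl_le {A : Set (α → Bool)} {ε : ℝ} (h : Pr p Aᶜ ≤ ε) :
    1 - ε ≤ Pr p A := by
  linarith [Pr_add_Pr_compl (p := p) A]

theorem Pr_eq_one_of_forall_mem {A : Set (α → Bool)} (h : ∀ σ, σ ∈ A) : Pr p A = 1 := by
  rw [Pr, Set.eq_univ_of_forall h, Set.indicator_univ, sum_bernWeight]

theorem Pr_le_Exp_div (hp : ∀ a, p a ∈ Set.Icc (0 : ℝ) 1) {A : Set (α → Bool)}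
    {f : (α → Bool) → ℝ} {r : ℝ} (hr : 0 < r) (hf : ∀ σ, 0 ≤ f σ) (hA : ∀ σ ∈ A, r ≤ f σ) :
    Pr p A ≤ Exp p f / r := by
  rw [Pr, Exp, Finset.sum_div]
  refine Finset.sum_le_sum fun σ _ => ?_
  rw [le_div_iff₀ hr]
  by_cases hσ : σ ∈ A
  · rw [Set.indicator_of_mem hσ]
    exact mul_le_mul_of_nonneg_left (hA σ hσ) (bernWeight_nonneg p hp σ)
  · rw [Set.indicator_of_notMem hσ, zero_mul]
    exact mul_nonneg (bernWeight_nonneg p hp σ) (hf σ)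

theorem Pr_le_sum_of_subset_biUnion (hp : ∀ a, p a ∈ Set.Icc (0 : ℝ) 1) {ι : Type*}
    {A : Set (α → Bool)} {s : Finset ι} {B : ι → Set (α → Bool)} (hA : A ⊆ ⋃ i ∈ s, B i) :
    Pr p A ≤ ∑ i ∈ s, Pr p (B i) := by
  have hind : ∀ (C : Set (α → Bool)) σ, 0 ≤ C.indicator (bernWeight p) σ := fun C σ =>
    Set.indicator_nonneg (fun τ _ => bernWeight_nonneg p hp τ) σ
  simp only [Pr]
  rw [Finset.sum_comm]
  refine Finset.sum_le_sum fun σ _ => ?_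
  by_cases hσ : σ ∈ A
  · obtain ⟨i, hi, hσi⟩ := Set.mem_iUnion₂.mp (hA hσ)
    rw [Set.indicator_of_mem hσ, ← Set.indicator_of_mem hσi (bernWeight p)]
    exact Finset.single_le_sum (fun j _ => hind (B j) σ) hi
  · rw [Set.indicator_of_notMem hσ]
    exact Finset.sum_nonneg fun j _ => hind (B j) σ

end Probability

section AdaptedTrials

open Classical

variable {α : Type*} {a : ℕ → α} {trial : ℕ → (α → Bool) → Prop} {m : ℕ}

theorem prod_ite_eq_pow_mul_pow (x y : ℝ) (σ : α → Bool) :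
    ∏ t ∈ (Finset.range m).filter (trial · σ), (if σ (a t) then y else x) =
      y ^ ((Finset.range m).filter fun t => trial t σ ∧ σ (a t) = true).card *
        x ^ ((Finset.range m).filter fun t => trial t σ ∧ σ (a t) = false).card := by
  rw [Finset.prod_ite, Finset.prod_const, Finset.prod_const, Finset.filter_filter,
    Finset.filter_filter]
  simp only [Bool.not_eq_true]

variable [DecidableEq α]

theorem prod_trials_update (ha : ∀ t < m, ∀ r < m, a t = a r → t = r)
    (htrial : ∀ t r, t ≤ r → r < m → ∀ σ b, trial t (Function.update σ (a r) b) ↔ trial t σ)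
    (g : Bool → ℝ) {q r : ℕ} (hqr : q ≤ r) (hr : r < m) (σ : α → Bool) (b : Bool) :
    ∏ t ∈ (Finset.range q).filter (trial · (Function.update σ (a r) b)),
        g (Function.update σ (a r) b (a t)) =
      ∏ t ∈ (Finset.range q).filter (trial · σ), g (σ (a t)) := by
  rw [Finset.filter_congr fun t ht => htrial t r ((Finset.mem_range.mp ht).le.trans hqr) hr σ b]
  refine Finset.prod_congr rfl fun t ht => ?_
  have htq := Finset.mem_range.mp (Finset.mem_filter.mp ht).1
  rw [Function.update_of_ne fun h => by have := ha t (by omega) r hr h; omega]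

variable [Fintype α] {p : α → ℝ}

/-- Whether step `t` is a trial is decided before its coin `a t` is read, and the coins `a t`
are distinct, so conditioning on `a q` turns the partial products into a martingale. -/
theorem Exp_prod_trials (ha : ∀ t < m, ∀ r < m, a t = a r → t = r)
    (htrial : ∀ t r, t ≤ r → r < m → ∀ σ b, trial t (Function.update σ (a r) b) ↔ trial t σ)
    {g : Bool → ℝ} (hg : ∀ t < m, p (a t) * g true + (1 - p (a t)) * g false = 1) :
    Exp p (fun σ => ∏ t ∈ (Finset.range m).filter (trial · σ), g (σ (a t))) = 1 := by
  suffices ∀ q ≤ m, Exp p (fun σ => ∏ t ∈ (Finset.range q).filter (trial · σ), g (σ (a t))) = 1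
    from this m le_rfl
  intro q
  induction q with
  | zero => simp [Exp, sum_bernWeight]
  | succ q ih =>
    intro hq
    have hstep : ∀ σ b, ∏ t ∈ (Finset.range (q + 1)).filter (trial · (Function.update σ (a q) b)),
          g (Function.update σ (a q) b (a t)) =
        (∏ t ∈ (Finset.range q).filter (trial · σ), g (σ (a t))) *
          if trial q σ then g b else 1 := by
      intro σ b
      rw [Finset.range_add_one, Finset.filter_insert, htrial q q le_rfl hq σ b,
        prod_trials_update ha htrial g q.le_refl hq σ b |>.symm]
      split_ifs with h
      · rw [Finset.prod_insert (by simp), Function.update_self, mul_comm]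
      · rw [mul_one]
    rw [Exp_eq_Exp_update p (a q)]
    refine (congrArg (Exp p) (funext fun σ => ?_)).trans (ih (Nat.le_of_succ_le hq))
    rw [hstep, hstep]
    split_ifs
    · linear_combination (∏ t ∈ (Finset.range q).filter (trial · σ), g (σ (a t))) * hg q hq
    · ring

theorem Pr_card_failures_gt_le (hp : ∀ a, p a ∈ Set.Icc (0 : ℝ) 1)
    (ha : ∀ t < m, ∀ r < m, a t = a r → t = r)
    (htrial : ∀ t r, t ≤ r → r < m → ∀ σ b, trial t (Function.update σ (a r) b) ↔ trial t σ)
    {p₀ : ℝ} (hp₀ : p₀ ∈ Set.Icc (0 : ℝ) 1) (hpa : ∀ t < m, p (a t) = p₀) {h : ℕ}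
    (hsucc : ∀ σ, ((Finset.range m).filter fun t => trial t σ ∧ σ (a t) = true).card ≤ h)
    (N : ℕ) :
    Pr p {σ | N < ((Finset.range m).filter fun t => trial t σ ∧ σ (a t) = false).card} ≤
      ((1 + p₀ / 2) ^ (N + 1) * ((1 + p₀) / 2) ^ h)⁻¹ := by
  obtain ⟨hp₀0, hp₀1⟩ := hp₀
  have hx : 1 ≤ 1 + p₀ / 2 := by linarith
  have hy0 : 0 < (1 + p₀) / 2 := by positivity
  have hy1 : (1 + p₀) / 2 ≤ 1 := by linarith
  set F : (α → Bool) → ℝ := fun σ =>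
    ∏ t ∈ (Finset.range m).filter (trial · σ), if σ (a t) then (1 + p₀) / 2 else 1 + p₀ / 2
  have hmean : Exp p F = 1 :=
    Exp_prod_trials (g := fun b => if b then (1 + p₀) / 2 else 1 + p₀ / 2) ha htrial
    fun t ht => by simp only [hpa t ht, if_true, Bool.false_eq_true, if_false]; ring
  calc _ ≤ Exp p F / ((1 + p₀ / 2) ^ (N + 1) * ((1 + p₀) / 2) ^ h) :=
        Pr_le_Exp_div hp (by positivity)
          (fun σ => Finset.prod_nonneg fun t _ => by split <;> positivity) fun σ hσ => ?_
    _ = _ := by rw [hmean, one_div]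
  rw [show F σ = _ from prod_ite_eq_pow_mul_pow _ _ σ, mul_comm (((1 + p₀) / 2) ^ _)]
  exact mul_le_mul (pow_le_pow_right₀ hx hσ) (pow_le_pow_of_le_one hy0.le hy1 (hsucc σ))
    (by positivity) (by positivity)

end AdaptedTrials

section Partitions

def connectedBefore (coin : Sym2 V → ℕ → Bool) (es : ℕ → Sym2 V) (t J : ℕ) : Prop :=
  ∀ u v : V, es t = s(u, v) → DStream coin es t J u v

/-- The arrival of `es t` is a trial at index `J`: its endpoints lie in one part of partition
`J - 1` but in different parts of partition `J`, so coin `J` of `es t` decides whether they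
merge. -/
def IsTrial (coin : Sym2 V → ℕ → Bool) (es : ℕ → Sym2 V) (t J : ℕ) : Prop :=
  connectedAtArrival coin es t (J - 1) ∧ ¬ connectedBefore coin es t J

theorem processEdge_equivalence (e : Sym2 V) (c : ℕ → Bool) (D : ℕ → V → V → Prop) :
    ∀ J, Equivalence (processEdge e c D J)
  | 0 => ⟨fun _ => trivial, fun _ => trivial, fun _ _ => trivial⟩
  | _ + 1 => Relation.EqvGen.is_equivalence _

theorem DStream_equivalence (coin : Sym2 V → ℕ → Bool) (es : ℕ → Sym2 V) :
    ∀ t J, Equivalence (DStream coin es t J)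
  | 0, 0 => ⟨fun _ => trivial, fun _ => trivial, fun _ _ => trivial⟩
  | 0, _ + 1 => eq_equivalence
  | _ + 1, J => processEdge_equivalence _ _ _ J

theorem processEdge_of_rel (e : Sym2 V) (c : ℕ → Bool) (D : ℕ → V → V → Prop) {J : ℕ}
    {u v : V} (h : D J u v) : processEdge e c D J u v := by
  cases J with
  | zero => trivial
  | succ J => exact Relation.EqvGen.rel _ _ (Or.inl h)

theorem processEdge_succ_of_coin {e : Sym2 V} (c : ℕ → Bool) (D : ℕ → V → V → Prop) {J : ℕ}
    {u v : V} (he : s(u, v) = e) (hc : c (J + 1) = true) (h : processEdge e c D J u v) :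
    processEdge e c D (J + 1) u v :=
  Relation.EqvGen.rel _ _ (Or.inr ⟨hc, he, h⟩)

theorem processEdge_congr {e : Sym2 V} {c c' : ℕ → Bool} {D D' : ℕ → V → V → Prop} {J : ℕ}
    (hc : ∀ j ≤ J, c j = c' j) (hD : ∀ j ≤ J, D j = D' j) :
    processEdge e c D J = processEdge e c' D' J := by
  induction J with
  | zero => rfl
  | succ J ih =>
    simp only [processEdge, hc (J + 1) le_rfl, hD (J + 1) le_rfl,
      ih (fun j hj => hc j (by omega)) (fun j hj => hD j (by omega))]

theorem DStream_congr {coin coin' : Sym2 V → ℕ → Bool} {es : ℕ → Sym2 V} {t : ℕ}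
    (h : ∀ s < t, coin (es s) = coin' (es s)) : DStream coin es t = DStream coin' es t := by
  induction t with
  | zero => rfl
  | succ t ih =>
    simp only [DStream]
    rw [h t (lt_add_one t), ih fun s hs => h s (by omega)]

theorem isTrial_congr {coin coin' : Sym2 V → ℕ → Bool} {es : ℕ → Sym2 V} {t i : ℕ}
    (hbefore : ∀ s < t, coin (es s) = coin' (es s))
    (hnow : ∀ j ≤ i - 1, coin (es t) j = coin' (es t) j) :
    IsTrial coin es t i ↔ IsTrial coin' es t i := by
  simp only [IsTrial, connectedAtArrival, connectedBefore, DStream_congr hbefore,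
    processEdge_congr hnow fun _ _ => rfl]

theorem exists_isTrial_of_not_connectedAtArrival {coin : Sym2 V → ℕ → Bool}
    {es : ℕ → Sym2 V} {t j : ℕ} (h : ¬ connectedAtArrival coin es t j) :
    ∃ i < j, IsTrial coin es t (i + 1) ∧ coin (es t) (i + 1) = false := by
  induction j with
  | zero => exact absurd (fun _ _ _ => trivial) h
  | succ j ih =>
    by_cases hj : connectedAtArrival coin es t j
    · refine ⟨j, lt_add_one j, ⟨hj, fun hb => h fun u v huv => ?_⟩, ?_⟩
      · exact processEdge_of_rel _ _ _ (hb u v huv)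
      · refine Bool.not_eq_true _ |>.mp fun hc => h fun u v huv => ?_
        exact processEdge_succ_of_coin _ _ huv.symm hc (hj u v huv)
    · obtain ⟨i, hij, hi⟩ := ih hj
      exact ⟨i, by omega, hi⟩

end Partitions

section Counting

theorem card_quot_le_of_le {A : Type*} [Finite A] {r r' : A → A → Prop}
    (h : ∀ a b, r a b → r' a b) : Nat.card (Quot r') ≤ Nat.card (Quot r) :=
  Nat.card_le_card_of_surjective (Quot.map id h) (Quot.ind fun a => ⟨Quot.mk r a, rfl⟩)

theorem card_quot_lt_of_le {A : Type*} [Finite A] {r r' : A → A → Prop}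
    (h : ∀ a b, r a b → r' a b) (hr : Equivalence r) {u v : A} (huv : ¬ r u v)
    (huv' : r' u v) : Nat.card (Quot r') < Nat.card (Quot r) := by
  refine (card_quot_le_of_le h).lt_of_ne fun heq => huv ?_
  have hbij : Function.Bijective (Quot.map id h) :=
    (Nat.bijective_iff_surjective_and_card _).mpr
      ⟨Quot.ind fun a => ⟨Quot.mk r a, rfl⟩, heq.symm⟩
  exact hr.eqvGen_iff.mp (Quot.eqvGen_exact (hbij.injective (Quot.sound huv')))

theorem card_filter_succ_lt_le {g : ℕ → ℕ} (hg : ∀ t, g (t + 1) ≤ g t) (m : ℕ) :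
    ((Finset.range m).filter fun t => g (t + 1) < g t).card ≤ g 0 := by
  suffices ((Finset.range m).filter fun t => g (t + 1) < g t).card + g m ≤ g 0 by omega
  induction m with
  | zero => simp
  | succ m ih =>
    rw [Finset.range_add_one, Finset.filter_insert]
    split_ifs with h
    · rw [Finset.card_insert_of_notMem (by simp)]
      omega
    · have := hg m
      omega

open Classical in
/-- A successful trial at index `i` merges two parts of partition `i`, which starts out as the
partition into singletons. -/
theorem card_successful_trials_le [Finite V] (coin : Sym2 V → ℕ → Bool) (es : ℕ → Sym2 V)
    {i : ℕ} (hi : 1 ≤ i) (m : ℕ) :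
    ((Finset.range m).filter fun t => IsTrial coin es t i ∧ coin (es t) i = true).card ≤
      Nat.card V := by
  set g : ℕ → ℕ := fun t => Nat.card (Quot (DStream coin es t i))
  have hg0 : g 0 = Nat.card V := by
    obtain ⟨j, rfl⟩ := Nat.exists_eq_add_of_le' hi
    exact Nat.card_congr (Equiv.ofBijective (Quot.lift id fun _ _ => id)
      ⟨Quot.ind fun a => Quot.ind fun b hab => congrArg (Quot.mk _) hab,
        fun a => ⟨Quot.mk _ a, rfl⟩⟩)
  refine hg0 ▸ (Finset.card_le_card fun t ht => ?_).trans
    (card_filter_succ_lt_le (fun t => card_quot_le_of_le fun _ _ => processEdge_of_rel _ _ _) m)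
  obtain ⟨htm, ⟨hconn, hbefore⟩, hc⟩ := Finset.mem_filter.mp ht
  simp only [connectedBefore, not_forall] at hbefore
  obtain ⟨u, v, huv, hsep⟩ := hbefore
  obtain ⟨j, rfl⟩ := Nat.exists_eq_add_of_le' hi
  exact Finset.mem_filter.mpr ⟨htm, card_quot_lt_of_le
    (fun _ _ => processEdge_of_rel _ _ _) (DStream_equivalence coin es t _) hsep
    (processEdge_succ_of_coin _ _ huv.symm hc (hconn u v huv))⟩

open Classical in
theorem card_not_connectedAtArrival_le (coin : Sym2 V → ℕ → Bool) (es : ℕ → Sym2 V)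
    (m j : ℕ) :
    ((Finset.range m).filter fun t => ¬ connectedAtArrival coin es t j).card ≤
      ∑ i ∈ Finset.range j, ((Finset.range m).filter fun t =>
        IsTrial coin es t (i + 1) ∧ coin (es t) (i + 1) = false).card := by
  refine (Finset.card_le_card fun t ht => ?_).trans Finset.card_biUnion_le
  obtain ⟨htm, hweak⟩ := Finset.mem_filter.mp ht
  obtain ⟨i, hij, hi⟩ := exists_isTrial_of_not_connectedAtArrival hweak
  exact Finset.mem_biUnion.mpr ⟨i, Finset.mem_range.mpr hij, Finset.mem_filter.mpr ⟨htm, hi⟩⟩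

end Counting

section Coins

variable {L K : ℕ}

theorem coinOf_succ (σ : Fin L × Fin K × Sym2 V → Bool) {j : ℕ} (hjL : j / K < L)
    (hjK : j % K < K) (e : Sym2 V) :
    coinOf σ e (j + 1) = σ (⟨j / K, hjL⟩, ⟨j % K, hjK⟩, e) := by
  simp [coinOf, hjL, hjK]

theorem coinOf_update_of_ne [DecidableEq V] (σ : Fin L × Fin K × Sym2 V → Bool) {j : ℕ}
    (hjL : j / K < L) (hjK : j % K < K) (e : Sym2 V) (b : Bool) {f : Sym2 V} {i : ℕ}
    (h : f ≠ e ∨ i ≠ j + 1) :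
    coinOf (Function.update σ (⟨j / K, hjL⟩, ⟨j % K, hjK⟩, e) b) f i = coinOf σ f i := by
  unfold coinOf
  split_ifs with hi
  · refine Function.update_of_ne (fun heq => ?_) _ _
    simp only [Prod.mk.injEq, Fin.mk.injEq] at heq
    obtain ⟨hdiv, hmod, rfl⟩ := heq
    rcases h with h | h
    · exact h rfl
    · have : i - 1 = j := by rw [← Nat.div_add_mod (i - 1) K, hdiv, hmod, Nat.div_add_mod]
      omega
  · rfl

theorem pCoins_mem_Icc (x : Fin L × Fin K × Sym2 V) : pCoins x ∈ Set.Icc (0 : ℝ) 1 :=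
  ⟨by unfold pCoins; positivity, pow_le_one₀ (by norm_num) (by norm_num)⟩

open Classical in
theorem Pr_card_failed_trials_gt_le [Fintype V] [DecidableEq V] {es : ℕ → Sym2 V} {m : ℕ}
    (hinj : ∀ t < m, ∀ t' < m, es t = es t' → t = t') {j : ℕ} (hj : j < K * L) (N : ℕ) :
    Pr (pCoins (L := L) (K := K)) {σ | N < ((Finset.range m).filter fun t =>
        IsTrial (coinOf σ) es t (j + 1) ∧ coinOf σ (es t) (j + 1) = false).card} ≤
      ((1 + (1 / 2 : ℝ) ^ (j / K + 1) / 2) ^ (N + 1) *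
        ((1 + (1 / 2 : ℝ) ^ (j / K + 1)) / 2) ^ Fintype.card V)⁻¹ := by
  have hK : 0 < K := Nat.pos_of_ne_zero fun h => by simp [h] at hj
  have hjL : j / K < L := (Nat.div_lt_iff_lt_mul hK).mpr (by linarith)
  have hjK : j % K < K := Nat.mod_lt j hK
  set a : ℕ → Fin L × Fin K × Sym2 V := fun t => (⟨j / K, hjL⟩, ⟨j % K, hjK⟩, es t)
  have ha : ∀ t < m, ∀ r < m, a t = a r → t = r := fun t ht r hr h =>
    hinj t ht r hr (Prod.ext_iff.mp (Prod.ext_iff.mp h).2).2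
  have htrial : ∀ t r, t ≤ r → r < m → ∀ σ b,
      IsTrial (coinOf (Function.update σ (a r) b)) es t (j + 1) ↔ IsTrial (coinOf σ) es t (j + 1) :=
    fun t r htr hr σ b => isTrial_congr
      (fun s hs => funext fun i => coinOf_update_of_ne σ hjL hjK (es r) b
        (Or.inl fun h => by have := hinj s (by omega) r hr h; omega))
      (fun i hi => coinOf_update_of_ne σ hjL hjK (es r) b (Or.inr (by omega)))
  have hsucc : ∀ σ, ((Finset.range m).filter fun t =>
      IsTrial (coinOf σ) es t (j + 1) ∧ σ (a t) = true).card ≤ Fintype.card V := fun σ => by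
    simpa only [coinOf_succ _ hjL hjK, Nat.card_eq_fintype_card] using
      card_successful_trials_le (coinOf σ) es (Nat.succ_pos j) m
  simp only [coinOf_succ _ hjL hjK]
  exact Pr_card_failures_gt_le pCoins_mem_Icc ha htrial (pCoins_mem_Icc (a 0)) (fun _ _ => rfl)
    hsucc N

end Coins

section Arithmetic

theorem sum_range_two_pow_div_add (K l : ℕ) :
    ∑ j ∈ Finset.range (K * l), 2 ^ (j / K) + K = K * 2 ^ l := by
  induction l with
  | zero => simp
  | succ l ih =>
    have hblock : ∑ x ∈ Finset.range K, 2 ^ ((K * l + x) / K) = K * 2 ^ l := by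
      rw [Finset.sum_congr rfl fun x hx => by
        rw [Nat.mul_add_div (by grind), Nat.div_eq_of_lt (Finset.mem_range.mp hx), add_zero]]
      simp
    rw [mul_add_one, Finset.sum_range_add, hblock, pow_succ]
    linarith

theorem three_halves_le_pow (s : ℕ) : (3 / 2 : ℝ) ≤ (1 + (1 / 2) ^ s / 2) ^ 2 ^ s := by
  have h := one_add_mul_le_pow (a := (1 / 2 : ℝ) ^ s / 2)
    (by linarith [show (0 : ℝ) ≤ (1 / 2) ^ s / 2 by positivity]) (2 ^ s)
  rwa [Nat.cast_pow, Nat.cast_ofNat, ← mul_div_assoc, ← mul_pow, mul_one_div_cancel two_ne_zero,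
    one_pow, show (1 : ℝ) + 1 / 2 = 3 / 2 by norm_num] at h

theorem inv_tail_le_three_halves (s c n N : ℕ) (hN : c * 2 ^ s * n ≤ N + 1) :
    ((1 + (1 / 2 : ℝ) ^ s / 2) ^ (N + 1) * ((1 + (1 / 2 : ℝ) ^ s) / 2) ^ n)⁻¹ ≤
      ((3 / 2 : ℝ) ^ (c * n) * (1 / 2) ^ n)⁻¹ := by
  have hp : (0 : ℝ) ≤ (1 / 2) ^ s := by positivity
  refine inv_anti₀ (by positivity) (mul_le_mul ?_ ?_ (by positivity) (by positivity))
  · calc (3 / 2 : ℝ) ^ (c * n) ≤ ((1 + (1 / 2) ^ s / 2) ^ 2 ^ s) ^ (c * n) :=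
          pow_le_pow_left₀ (by norm_num) (three_halves_le_pow s) _
      _ = (1 + (1 / 2 : ℝ) ^ s / 2) ^ (c * 2 ^ s * n) := by ring
      _ ≤ _ := pow_le_pow_right₀ (by linarith) hN
  · exact pow_le_pow_left₀ (by norm_num) (by linarith) n

theorem mul_succ_mul_pow_le_two_pow (D n : ℕ) : n * (n + 1) * n ^ D ≤ 2 ^ ((D + 2) * n) := by
  rcases Nat.eq_zero_or_pos n with rfl | hn
  · simp
  have h1 : n ≤ 2 ^ (n - 1) := by
    have := Nat.lt_two_pow_self (n := n - 1)
    omega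
  calc n * (n + 1) * n ^ D ≤ 2 ^ (n - 1) * 2 ^ n * (2 ^ (n - 1)) ^ D :=
        Nat.mul_le_mul (Nat.mul_le_mul h1 Nat.lt_two_pow_self) (Nat.pow_le_pow_left h1 D)
    _ = 2 ^ ((n - 1) * (D + 1) + n) := by ring
    _ ≤ 2 ^ ((D + 2) * n) := Nat.pow_le_pow_right two_pos (by
        have : (n - 1) * (D + 1) ≤ n * (D + 1) := Nat.mul_le_mul_right _ (Nat.sub_le n 1)
        nlinarith)

theorem mul_succ_mul_inv_le_rpow_neg (d : ℝ) {n : ℕ} (hn : 1 ≤ n) :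
    (n * (n + 1) : ℝ) * ((3 / 2 : ℝ) ^ (2 * (⌈d⌉₊ + 3) * n) * (1 / 2) ^ n)⁻¹ ≤
      (n : ℝ) ^ (-d) := by
  set D := ⌈d⌉₊
  have hn' : (1 : ℝ) ≤ n := by exact_mod_cast hn
  have hX : (2 : ℝ) ^ ((D + 2) * n) ≤ (3 / 2 : ℝ) ^ (2 * (D + 3) * n) * (1 / 2) ^ n := by
    calc (2 : ℝ) ^ ((D + 2) * n) = 2 ^ ((D + 3) * n) * (1 / 2) ^ n := by
          rw [show (D + 3) * n = (D + 2) * n + n by ring, pow_add, mul_assoc, ← mul_pow]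
          norm_num
      _ ≤ ((3 / 2 : ℝ) ^ 2) ^ ((D + 3) * n) * (1 / 2) ^ n := by gcongr; norm_num
      _ = _ := by rw [← pow_mul, mul_assoc]
  have hpoly : (n * (n + 1) : ℝ) * (n : ℝ) ^ D ≤ 2 ^ ((D + 2) * n) := by
    exact_mod_cast mul_succ_mul_pow_le_two_pow D n
  calc (n * (n + 1) : ℝ) * ((3 / 2 : ℝ) ^ (2 * (D + 3) * n) * (1 / 2) ^ n)⁻¹
      ≤ (n * (n + 1) : ℝ) * ((n * (n + 1) : ℝ) * (n : ℝ) ^ D)⁻¹ :=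
        mul_le_mul_of_nonneg_left (inv_anti₀ (by positivity) (hpoly.trans hX)) (by positivity)
    _ = ((n : ℝ) ^ (D : ℝ))⁻¹ := by
        rw [Real.rpow_natCast, mul_inv, ← mul_assoc, mul_inv_cancel₀ (by positivity), one_mul]
    _ ≤ (n : ℝ) ^ (-d) := by
        rw [Real.rpow_neg (by positivity)]
        exact inv_anti₀ (by positivity) (Real.rpow_le_rpow_of_exponent_le hn' (Nat.le_ceil d))

end Arithmetic

section WeakEdges

theorem ncard_setOf_lt_and (m : ℕ) (P : ℕ → Prop) [DecidablePred P] :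
    {t | t < m ∧ P t}.ncard = ((Finset.range m).filter P).card := by
  rw [← Set.ncard_coe_finset]
  congr 1
  ext t
  simp

theorem le_card_choose_two [Fintype V] [DecidableEq V] {es : ℕ → Sym2 V} {m : ℕ}
    (hdiag : ∀ t < m, ¬ (es t).IsDiag) (hinj : ∀ t < m, ∀ t' < m, es t = es t' → t = t') :
    m ≤ (Fintype.card V).choose 2 := by
  rw [← Sym2.card_subtype_not_diag]
  simpa using Fintype.card_le_of_injective
    (fun t : Fin m => (⟨es t, hdiag t t.isLt⟩ : {e : Sym2 V // ¬ e.IsDiag}))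
    fun t t' h => Fin.ext (hinj t t.isLt t' t'.isLt (congrArg Subtype.val h))

theorem ncard_setOf_lt_le_of_card_le [Fintype V] [DecidableEq V] {es : ℕ → Sym2 V} {m : ℕ}
    (hdiag : ∀ t < m, ¬ (es t).IsDiag) (hinj : ∀ t < m, ∀ t' < m, es t = es t' → t = t')
    {K : ℕ} (hK : Fintype.card V ≤ K) {c : ℝ} (hc : 1 ≤ c) (l : ℕ) (P : ℕ → Prop) :
    ({t | t < m ∧ P t}.ncard : ℝ) ≤ c * K * 2 ^ l * Fintype.card V := by
  classical
  have hsq : {t | t < m ∧ P t}.ncard ≤ Fintype.card V * Fintype.card V := by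
    rw [ncard_setOf_lt_and, ← sq]
    exact (Finset.card_filter_le _ _).trans <| (Finset.card_range m).le.trans <|
      (le_card_choose_two hdiag hinj).trans (Nat.choose_le_pow _ _)
  have hK' : (Fintype.card V : ℝ) ≤ K := by exact_mod_cast hK
  have h2l : (1 : ℝ) ≤ c * 2 ^ l := one_le_mul_of_one_le_of_one_le hc (one_le_pow₀ one_le_two)
  calc ({t | t < m ∧ P t}.ncard : ℝ) ≤ Fintype.card V * Fintype.card V := by exact_mod_cast hsq
    _ ≤ 1 * K * Fintype.card V := by rw [one_mul]; gcongr
    _ ≤ c * 2 ^ l * K * Fintype.card V := by gcongr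
    _ = c * K * 2 ^ l * Fintype.card V := by ring

open Classical in
theorem card_not_connectedAtArrival_le_of_forall (coin : Sym2 V → ℕ → Bool) (es : ℕ → Sym2 V)
    {m j K l c : ℕ} (hjl : j ≤ K * l)
    (h : ∀ i < j, ((Finset.range m).filter fun t =>
      IsTrial coin es t (i + 1) ∧ coin (es t) (i + 1) = false).card ≤ c * 2 ^ (i / K)) :
    ((Finset.range m).filter fun t => ¬ connectedAtArrival coin es t j).card ≤ c * (K * 2 ^ l) :=
  calc _ ≤ ∑ i ∈ Finset.range j, c * 2 ^ (i / K) :=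
        (card_not_connectedAtArrival_le coin es m j).trans
          (Finset.sum_le_sum fun i hi => h i (Finset.mem_range.mp hi))
    _ ≤ ∑ i ∈ Finset.range (K * l), c * 2 ^ (i / K) :=
        Finset.sum_le_sum_of_subset (Finset.range_subset_range.mpr hjl)
    _ ≤ c * (K * 2 ^ l) := by
        rw [← Finset.mul_sum, ← sum_range_two_pow_div_add K l]
        exact Nat.mul_le_mul_left c (Nat.le_add_right _ _)

open Classical in
theorem Pr_compl_weak_edges_le [Fintype V] [DecidableEq V] {es : ℕ → Sym2 V} {m L K l j : ℕ}
    (hinj : ∀ t < m, ∀ t' < m, es t = es t' → t = t') (hjl : j ≤ K * l) (hlL : l ≤ L)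
    (c : ℕ) :
    Pr (pCoins (L := L) (K := K))
        {σ | (({t | t < m ∧ ¬ connectedAtArrival (coinOf σ) es t j}.ncard : ℝ)) ≤
          2 * c * K * 2 ^ l * Fintype.card V}ᶜ ≤
      j * ((3 / 2 : ℝ) ^ (c * Fintype.card V) * (1 / 2) ^ Fintype.card V)⁻¹ := by
  set n := Fintype.card V
  refine (Pr_le_sum_of_subset_biUnion pCoins_mem_Icc (s := Finset.range j)
    (B := fun i => {σ | 2 * c * n * 2 ^ (i / K) < ((Finset.range m).filter fun t =>
      IsTrial (coinOf σ) es t (i + 1) ∧ coinOf σ (es t) (i + 1) = false).card}) ?_).trans ?_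
  · intro σ hσ
    by_contra hnot
    simp only [Set.mem_iUnion, Set.mem_ofPred_eq, Finset.mem_range, not_exists, not_lt] at hnot
    refine hσ ?_
    rw [Set.mem_ofPred_eq, ncard_setOf_lt_and]
    exact_mod_cast (card_not_connectedAtArrival_le_of_forall _ es hjl hnot).trans_eq
      (show 2 * c * n * (K * 2 ^ l) = 2 * c * K * 2 ^ l * n by ring)
  · refine (Finset.sum_le_card_nsmul _ _ _ fun i hi => ?_).trans_eq
      (by rw [Finset.card_range, nsmul_eq_mul])
    refine (Pr_card_failed_trials_gt_le hinj ?_ _).trans (inv_tail_le_three_halves _ c n _ ?_)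
    · have := Finset.mem_range.mp hi
      nlinarith
    · rw [pow_succ]
      nlinarith

end WeakEdges

theorem one_pass_weak_edges_bound_general (d : ℝ) :
    ∃ c : ℝ, 0 < c ∧
      ∀ (V : Type) [Fintype V] [DecidableEq V] (es : ℕ → Sym2 V) (m K : ℕ),
        (∀ t < m, ¬ (es t).IsDiag) →
        (∀ t < m, ∀ t' < m, es t = es t' → t = t') →
        (Fintype.card V : ℝ) < (4 / 3 : ℝ) ^ K →
        let n : ℕ := Fintype.card V
        let L : ℕ := Nat.clog 2 (2 * n)
        ∀ J l k : ℕ, 1 ≤ l → l ≤ L → 1 ≤ k → k ≤ K → J = K * (l - 1) + k →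
          1 - (n : ℝ) ^ (-d) ≤
            Pr (pCoins (V := V) (L := L) (K := K))
              {σ | (({t | t < m ∧ ¬ connectedAtArrival (coinOf σ) es t (J - 1)}.ncard : ℝ)) ≤
                c * K * 2 ^ l * n} := by
  set c : ℕ := 2 * (⌈d⌉₊ + 3)
  refine ⟨2 * c, by positivity, ?_⟩
  intro V _ _ es m K hdiag hinj _ n L J l k hl hlL hk hkK hJ
  have hn : 1 ≤ n := Nat.pos_of_ne_zero fun h0 => by simp [L, h0] at hlL; omega
  have hJl : J - 1 ≤ K * l := by
    obtain ⟨l', rfl⟩ := Nat.exists_eq_add_of_le' hl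
    rw [hJ, Nat.add_sub_cancel, mul_add_one]
    omega
  rcases lt_or_ge n K with hnK | hKn
  · refine le_of_le_of_eq ?_ (Pr_eq_one_of_forall_mem fun σ => ?_).symm
    · linarith [Real.rpow_nonneg (Nat.cast_nonneg n) (-d)]
    · exact ncard_setOf_lt_le_of_card_le hdiag hinj hnK.le (by norm_cast; omega) l _
  · have hLn : L ≤ n + 1 := (Nat.clog_le_iff_le_pow one_lt_two).mpr
      (by rw [pow_succ]; linarith [Nat.lt_two_pow_self (n := n)])
    have hJn : ((J - 1 : ℕ) : ℝ) ≤ n * (n + 1) := by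
      exact_mod_cast hJl.trans (Nat.mul_le_mul hKn (hlL.trans hLn))
    refine one_sub_le_Pr_of_Pr_compl_le ((Pr_compl_weak_edges_le hinj hJl hlL c).trans ?_)
    exact (mul_le_mul_of_nonneg_right hJn (by positivity)).trans
      (mul_succ_mul_inv_le_rpow_neg d hn)

/-- In the one-pass refinement sampling process (Algorithm 3), for every index
`1 ≤ J ≤ LK` with `J = (l, k)` (i.e. `J = K(l-1) + k`), let `X^J` denote the set of edges
`e_t = (u_t, v_t)` such that `u_t` and `v_t` lie in the same part of `D_{J-1}` at the moment
`e_t` arrives. Then there is a constant `c` (depending on `d`) such that with probability at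
least `1 - n^{-d}`, `|E ∖ X^J| ≤ c K 2^l n`. -/
theorem one_pass_weak_edges_bound (d : ℝ) (hd : 0 < d) :
    ∃ c : ℝ, 0 < c ∧
      ∀ (V : Type) [Fintype V] [DecidableEq V] (es : ℕ → Sym2 V) (m K : ℕ),
        (∀ t < m, ¬ (es t).IsDiag) →
        (∀ t < m, ∀ t' < m, es t = es t' → t = t') →
        (Fintype.card V : ℝ) < (4 / 3 : ℝ) ^ K →
        let n : ℕ := Fintype.card V
        let L : ℕ := Nat.clog 2 (2 * n)
        ∀ J l k : ℕ, 1 ≤ l → l ≤ L → 1 ≤ k → k ≤ K → J = K * (l - 1) + k →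
          1 - (n : ℝ) ^ (-d) ≤
            Pr (pCoins (V := V) (L := L) (K := K))
              {σ | (({t | t < m ∧ ¬ connectedAtArrival (coinOf σ) es t (J - 1)}.ncard : ℝ)) ≤
                c * K * 2 ^ l * n} :=
  one_pass_weak_edges_bound_general d

end GraphSparsification
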